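/- arXiv:2302.00878 — 4 statements merged into one kernel-verified Lean document; each statement's English description precedes it below -/
import Mathlib

section
/- Let η̃ᵢⱼ = 0 if (ηᵢⱼ < 0 and j ∈ P) or (ηᵢⱼ > 0 and j ∈ N), and η̃ᵢⱼ = ηᵢⱼ otherwise. Then the sign-constrained ℓ₁-projection problem with inputs η₁,…,ηₙ admits the same optimal solution as the unconstrained-sign ℓ₁-projection problem with inputs η̃₁,…,η̃ₙ: minimize (1/n)∑ᵢ‖η̃ᵢ − βᵢ‖₂² subject to (1/n)∑ᵢ‖βᵢ‖₁ ≤ λ. -/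
private lemma sum_eq_add' {m : ℕ} (f g : Fin m → ℝ) (i₀ : Fin m)
    (h : ∀ i, i ≠ i₀ → f i = g i) :
    ∑ i, f i = ∑ i, g i + (f i₀ - g i₀) := by
  have h1 : ∑ i, (f i - g i) = f i₀ - g i₀ :=
    Finset.sum_eq_single_of_mem i₀ (Finset.mem_univ _)
      (fun i _ hi => by rw [h i hi]; ring)
  rw [Finset.sum_sub_distrib] at h1
  linarith

private lemma sum_zero_entry {n p : ℕ} (β : Fin n → Fin p → ℝ) (i₀ : Fin n) (j₀ : Fin p)
    (F : Fin n → Fin p → ℝ → ℝ) :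
    ∑ i, ∑ j, F i j (if i = i₀ ∧ j = j₀ then 0 else β i j)
      = ∑ i, ∑ j, F i j (β i j) + (F i₀ j₀ 0 - F i₀ j₀ (β i₀ j₀)) := by
  have inner : ∑ j, F i₀ j (if i₀ = i₀ ∧ j = j₀ then 0 else β i₀ j)
      = ∑ j, F i₀ j (β i₀ j) + (F i₀ j₀ 0 - F i₀ j₀ (β i₀ j₀)) := by
    have := sum_eq_add' (fun j => F i₀ j (if i₀ = i₀ ∧ j = j₀ then 0 else β i₀ j))
      (fun j => F i₀ j (β i₀ j)) j₀ (fun j hj => by simp [hj])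
    simpa using this
  have outer := sum_eq_add'
      (fun i => ∑ j, F i j (if i = i₀ ∧ j = j₀ then 0 else β i j))
      (fun i => ∑ j, F i j (β i j)) i₀ (fun i hi => by simp [hi])
  simp only [eq_self_iff_true, true_and] at inner outer
  rw [outer, inner]
  ring

/-- The sign-constrained ℓ₁-projection problem with inputs `η` has the same
    optimal solutions as the plain ℓ₁-projection problem with inputs `η̃`, where
    `η̃ i j` is `0` whenever `η i j` violates the sign constraint and `η i j` otherwise. -/
theorem stmt_1 {n p : ℕ} (η ηt : Fin n → Fin p → ℝ) (lam : ℝ) (hlam : 0 ≤ lam)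
    (P N : Finset (Fin p)) (hPN : Disjoint P N)
    (hηt : ∀ i j, ηt i j =
      if (η i j < 0 ∧ j ∈ P) ∨ (0 < η i j ∧ j ∈ N) then 0 else η i j) :
    ∀ β : Fin n → Fin p → ℝ,
      (((1 / (n : ℝ)) * ∑ i, ∑ j, |β i j| ≤ lam ∧
          (∀ i, ∀ j ∈ P, 0 ≤ β i j) ∧ (∀ i, ∀ j ∈ N, β i j ≤ 0)) ∧
        ∀ β' : Fin n → Fin p → ℝ,
          ((1 / (n : ℝ)) * ∑ i, ∑ j, |β' i j| ≤ lam ∧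
            (∀ i, ∀ j ∈ P, 0 ≤ β' i j) ∧ (∀ i, ∀ j ∈ N, β' i j ≤ 0)) →
          (1 / (n : ℝ)) * ∑ i, ∑ j, (η i j - β i j) ^ 2 ≤
            (1 / (n : ℝ)) * ∑ i, ∑ j, (η i j - β' i j) ^ 2)
      ↔
      (((1 / (n : ℝ)) * ∑ i, ∑ j, |β i j| ≤ lam) ∧
        ∀ β' : Fin n → Fin p → ℝ,
          ((1 / (n : ℝ)) * ∑ i, ∑ j, |β' i j| ≤ lam) →
          (1 / (n : ℝ)) * ∑ i, ∑ j, (ηt i j - β i j) ^ 2 ≤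
            (1 / (n : ℝ)) * ∑ i, ∑ j, (ηt i j - β' i j) ^ 2) := by
  classical
  -- dispose of the degenerate case n = 0
  rcases Nat.eq_zero_or_pos n with hn0 | hn0
  · subst hn0
    intro β
    simp [hlam]
  have hnpos : (0:ℝ) < 1 / (n:ℝ) := by positivity
  have hn : (0:ℝ) ≤ 1 / (n:ℝ) := le_of_lt hnpos
  intro β
  -- the "violation" cost
  set c : Fin n → Fin p → ℝ :=
    fun i j => if (η i j < 0 ∧ j ∈ P) ∨ (0 < η i j ∧ j ∈ N) then (η i j)^2 else 0 with hc
  -- splitting a double sum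
  have sum_split : ∀ (A B : Fin n → Fin p → ℝ),
      ∑ i, ∑ j, (A i j + B i j) = (∑ i, ∑ j, A i j) + ∑ i, ∑ j, B i j := by
    intro A B
    rw [← Finset.sum_add_distrib]
    exact Finset.sum_congr rfl (fun i _ => Finset.sum_add_distrib)
  -- entrywise inequality for sign-feasible points
  have hB : ∀ β'' : Fin n → Fin p → ℝ, (∀ i, ∀ j ∈ P, 0 ≤ β'' i j) →
      (∀ i, ∀ j ∈ N, β'' i j ≤ 0) → ∀ i j,
      (ηt i j - β'' i j)^2 + c i j ≤ (η i j - β'' i j)^2 := by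
    intro β'' hP' hN' i j
    rw [hηt]
    simp only [hc]
    by_cases h : (η i j < 0 ∧ j ∈ P) ∨ (0 < η i j ∧ j ∈ N)
    · rw [if_pos h, if_pos h]
      rcases h with ⟨h1, h2⟩ | ⟨h1, h2⟩
      · have := hP' i j h2; nlinarith
      · have := hN' i j h2; nlinarith
    · simp [if_neg h]
  -- entrywise equality for points vanishing on violating entries
  have hBeq : ∀ β'' : Fin n → Fin p → ℝ,
      (∀ i j, ((η i j < 0 ∧ j ∈ P) ∨ (0 < η i j ∧ j ∈ N)) → β'' i j = 0) →
      ∀ i j, (η i j - β'' i j)^2 = (ηt i j - β'' i j)^2 + c i j := by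
    intro β'' h0 i j
    rw [hηt]
    simp only [hc]
    by_cases h : (η i j < 0 ∧ j ∈ P) ∨ (0 < η i j ∧ j ∈ N)
    · rw [if_pos h, if_pos h, h0 i j h]; ring
    · simp [if_neg h]
  -- feasibility of zeroing one entry
  have feas_update : ∀ (γ : Fin n → Fin p → ℝ) (i₀ : Fin n) (j₀ : Fin p),
      (1/(n:ℝ)) * ∑ i, ∑ j, |γ i j| ≤ lam →
      (1/(n:ℝ)) * ∑ i, ∑ j, |if i = i₀ ∧ j = j₀ then 0 else γ i j| ≤ lam := by
    intro γ i₀ j₀ hf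
    have hs := sum_zero_entry γ i₀ j₀ (fun _ _ x => |x|)
    have h2 : ∑ i, ∑ j, |if i = i₀ ∧ j = j₀ then 0 else γ i j| ≤ ∑ i, ∑ j, |γ i j| := by
      rw [hs]; simp [abs_nonneg]
    calc (1/(n:ℝ)) * ∑ i, ∑ j, |if i = i₀ ∧ j = j₀ then 0 else γ i j|
        ≤ (1/(n:ℝ)) * ∑ i, ∑ j, |γ i j| := by
          exact mul_le_mul_of_nonneg_left h2 hn
      _ ≤ lam := hf
  -- entrywise consequence of optimality against zeroing one entry
  have entry_ineq : ∀ (θ γ : Fin n → Fin p → ℝ) (i₀ : Fin n) (j₀ : Fin p),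
      (1/(n:ℝ)) * ∑ i, ∑ j, (θ i j - γ i j)^2 ≤
        (1/(n:ℝ)) * ∑ i, ∑ j, (θ i j - (if i = i₀ ∧ j = j₀ then 0 else γ i j))^2 →
      (θ i₀ j₀ - γ i₀ j₀)^2 ≤ (θ i₀ j₀)^2 := by
    intro θ γ i₀ j₀ h
    have h2 : ∑ i, ∑ j, (θ i j - γ i j)^2 ≤
        ∑ i, ∑ j, (θ i j - (if i = i₀ ∧ j = j₀ then 0 else γ i j))^2 :=
      le_of_mul_le_mul_left (by linarith) hnpos
    have hs := sum_zero_entry γ i₀ j₀ (fun i j x => (θ i j - x)^2)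
    rw [hs] at h2
    nlinarith [h2]
  constructor
  · rintro ⟨⟨hfeas, hsP, hsN⟩, hopt⟩
    -- β vanishes on violating entries
    have hβ0 : ∀ i j, ((η i j < 0 ∧ j ∈ P) ∨ (0 < η i j ∧ j ∈ N)) → β i j = 0 := by
      intro i j hv
      have hfe := feas_update β i j hfeas
      have hP2 : ∀ i', ∀ j' ∈ P, (0:ℝ) ≤ if i' = i ∧ j' = j then 0 else β i' j' := by
        intro i' j' hj'
        by_cases h : i' = i ∧ j' = j
        · rw [if_pos h]
        · rw [if_neg h]; exact hsP i' j' hj'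
      have hN2 : ∀ i', ∀ j' ∈ N, (if i' = i ∧ j' = j then 0 else β i' j') ≤ 0 := by
        intro i' j' hj'
        by_cases h : i' = i ∧ j' = j
        · rw [if_pos h]
        · rw [if_neg h]; exact hsN i' j' hj'
      have hei := entry_ineq η β i j (hopt _ ⟨hfe, hP2, hN2⟩)
      have hsq : β i j ^ 2 ≤ 0 := by
        rcases hv with ⟨h1, h2⟩ | ⟨h1, h2⟩
        · have := hsP i j h2; nlinarith
        · have := hsN i j h2; nlinarith
      have : β i j ^ 2 = 0 := le_antisymm hsq (sq_nonneg _)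
      exact pow_eq_zero_iff two_ne_zero |>.mp this
    refine ⟨hfeas, ?_⟩
    intro β' hf'
    -- the sign-corrected version of β'
    set T : Fin n → Fin p → ℝ := fun i j =>
      if (η i j < 0 ∧ j ∈ P) ∨ (0 < η i j ∧ j ∈ N) then 0
      else if j ∈ P then max (β' i j) 0
      else if j ∈ N then min (β' i j) 0 else β' i j with hT
    have hTabs : ∀ i j, |T i j| ≤ |β' i j| := by
      intro i j
      rw [hT]
      simp only
      split_ifs with h1 h2 h3
      · simp [abs_nonneg]
      · rcases le_total 0 (β' i j) with h | h
        · rw [max_eq_left h]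
        · rw [max_eq_right h]; simp [abs_nonneg]
      · rcases le_total (β' i j) 0 with h | h
        · rw [min_eq_left h]
        · rw [min_eq_right h]; simp [abs_nonneg]
      · exact le_refl _
    have hTfeas : (1/(n:ℝ)) * ∑ i, ∑ j, |T i j| ≤ lam := by
      calc (1/(n:ℝ)) * ∑ i, ∑ j, |T i j|
          ≤ (1/(n:ℝ)) * ∑ i, ∑ j, |β' i j| := by
            apply mul_le_mul_of_nonneg_left _ hn
            exact Finset.sum_le_sum (fun i _ => Finset.sum_le_sum (fun j _ => hTabs i j))
        _ ≤ lam := hf'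
    have hTP : ∀ i, ∀ j ∈ P, 0 ≤ T i j := by
      intro i j hj
      rw [hT]; simp only
      by_cases h1 : (η i j < 0 ∧ j ∈ P) ∨ (0 < η i j ∧ j ∈ N)
      · rw [if_pos h1]
      · rw [if_neg h1, if_pos hj]; exact le_max_right _ _
    have hTN : ∀ i, ∀ j ∈ N, T i j ≤ 0 := by
      intro i j hj
      have hjP : j ∉ P := fun hjP => (Finset.disjoint_left.mp hPN hjP) hj
      rw [hT]; simp only
      by_cases h1 : (η i j < 0 ∧ j ∈ P) ∨ (0 < η i j ∧ j ∈ N)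
      · rw [if_pos h1]
      · rw [if_neg h1, if_neg hjP, if_pos hj]; exact min_le_right _ _
    have hT0 : ∀ i j, ((η i j < 0 ∧ j ∈ P) ∨ (0 < η i j ∧ j ∈ N)) → T i j = 0 := by
      intro i j h; rw [hT]; simp only; rw [if_pos h]
    have hTg : ∀ i j, (ηt i j - T i j)^2 ≤ (ηt i j - β' i j)^2 := by
      intro i j
      rw [hηt, hT]
      simp only
      by_cases h : (η i j < 0 ∧ j ∈ P) ∨ (0 < η i j ∧ j ∈ N)
      · rw [if_pos h, if_pos h]; simpa using sq_nonneg (β' i j)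
      · rw [if_neg h, if_neg h]
        by_cases hp : j ∈ P
        · rw [if_pos hp]
          have hη : 0 ≤ η i j := by
            by_contra hcon; push_neg at hcon; exact h (Or.inl ⟨hcon, hp⟩)
          rcases le_total 0 (β' i j) with hb | hb
          · rw [max_eq_left hb]
          · rw [max_eq_right hb]; nlinarith
        · rw [if_neg hp]
          by_cases hq : j ∈ N
          · rw [if_pos hq]
            have hη : η i j ≤ 0 := by
              by_contra hcon; push_neg at hcon; exact h (Or.inr ⟨hcon, hq⟩)
            rcases le_total (β' i j) 0 with hb | hb
            · rw [min_eq_left hb]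
            · rw [min_eq_right hb]; nlinarith
          · rw [if_neg hq]
    -- combine everything
    have h1 := hopt T ⟨hTfeas, hTP, hTN⟩
    have h1' : ∑ i, ∑ j, (η i j - β i j)^2 ≤ ∑ i, ∑ j, (η i j - T i j)^2 :=
      le_of_mul_le_mul_left (by linarith) hnpos
    have e1 : ∑ i, ∑ j, (η i j - β i j)^2
        = (∑ i, ∑ j, (ηt i j - β i j)^2) + ∑ i, ∑ j, c i j := by
      rw [← sum_split]
      exact Finset.sum_congr rfl (fun i _ => Finset.sum_congr rfl
        (fun j _ => hBeq β hβ0 i j))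
    have e2 : ∑ i, ∑ j, (η i j - T i j)^2
        = (∑ i, ∑ j, (ηt i j - T i j)^2) + ∑ i, ∑ j, c i j := by
      rw [← sum_split]
      exact Finset.sum_congr rfl (fun i _ => Finset.sum_congr rfl
        (fun j _ => hBeq T hT0 i j))
    have h2 : ∑ i, ∑ j, (ηt i j - T i j)^2 ≤ ∑ i, ∑ j, (ηt i j - β' i j)^2 :=
      Finset.sum_le_sum (fun i _ => Finset.sum_le_sum (fun j _ => hTg i j))
    have hfinal : ∑ i, ∑ j, (ηt i j - β i j)^2 ≤ ∑ i, ∑ j, (ηt i j - β' i j)^2 := by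
      rw [e1, e2] at h1'; linarith
    exact mul_le_mul_of_nonneg_left hfinal hn
  · rintro ⟨hfeas, hopt⟩
    -- entrywise optimality consequence
    have key : ∀ i j, (ηt i j - β i j)^2 ≤ (ηt i j)^2 := by
      intro i j
      exact entry_ineq ηt β i j (hopt _ (feas_update β i j hfeas))
    have hβ0 : ∀ i j, ((η i j < 0 ∧ j ∈ P) ∨ (0 < η i j ∧ j ∈ N)) → β i j = 0 := by
      intro i j hv
      have hz : ηt i j = 0 := by rw [hηt, if_pos hv]
      have := key i j
      rw [hz] at this
      have hsq : β i j ^ 2 = 0 := by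
        have : β i j ^ 2 ≤ 0 := by nlinarith
        exact le_antisymm this (sq_nonneg _)
      exact pow_eq_zero_iff two_ne_zero |>.mp hsq
    have hsP : ∀ i, ∀ j ∈ P, 0 ≤ β i j := by
      intro i j hj
      by_cases hv : (η i j < 0 ∧ j ∈ P) ∨ (0 < η i j ∧ j ∈ N)
      · rw [hβ0 i j hv]
      · have hη : 0 ≤ η i j := by
          by_contra hcon; push_neg at hcon; exact hv (Or.inl ⟨hcon, hj⟩)
        have hz : ηt i j = η i j := by rw [hηt, if_neg hv]
        have := key i j
        rw [hz] at this
        by_contra hcon; push_neg at hcon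
        nlinarith
    have hsN : ∀ i, ∀ j ∈ N, β i j ≤ 0 := by
      intro i j hj
      by_cases hv : (η i j < 0 ∧ j ∈ P) ∨ (0 < η i j ∧ j ∈ N)
      · rw [hβ0 i j hv]
      · have hη : η i j ≤ 0 := by
          by_contra hcon; push_neg at hcon; exact hv (Or.inr ⟨hcon, hj⟩)
        have hz : ηt i j = η i j := by rw [hηt, if_neg hv]
        have := key i j
        rw [hz] at this
        by_contra hcon; push_neg at hcon
        nlinarith
    refine ⟨⟨hfeas, hsP, hsN⟩, ?_⟩
    rintro β' ⟨hf', hP', hN'⟩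
    have e1 : ∑ i, ∑ j, (η i j - β i j)^2
        = (∑ i, ∑ j, (ηt i j - β i j)^2) + ∑ i, ∑ j, c i j := by
      rw [← sum_split]
      exact Finset.sum_congr rfl (fun i _ => Finset.sum_congr rfl
        (fun j _ => hBeq β hβ0 i j))
    have h2 : ∑ i, ∑ j, (ηt i j - β i j)^2 ≤ ∑ i, ∑ j, (ηt i j - β' i j)^2 :=
      le_of_mul_le_mul_left (by linarith [hopt β' hf']) hnpos
    have h3 : (∑ i, ∑ j, (ηt i j - β' i j)^2) + (∑ i, ∑ j, c i j)
        ≤ ∑ i, ∑ j, (η i j - β' i j)^2 := by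
      rw [← sum_split]
      exact Finset.sum_le_sum (fun i _ => Finset.sum_le_sum
        (fun j _ => hB β' hP' hN' i j))
    have hfinal : ∑ i, ∑ j, (η i j - β i j)^2 ≤ ∑ i, ∑ j, (η i j - β' i j)^2 := by
      rw [e1]; linarith
    exact mul_le_mul_of_nonneg_left hfinal hn
end

section
/- Let μ be the vector of absolute values |ηⱼ| sorted in decreasing order (μ₁ ≥ μ₂ ≥ … ≥ μₚ), assume ‖η‖₁ > λ ≥ 0, let k* = max{k : μₖ > (∑ₗ₌₁ᵏ μₗ − λ)/k} and θ = (∑ₖ₌₁^{k*} μₖ − λ)/k*. Then θ ≥ 0 and ∑ⱼ max(|ηⱼ| − θ, 0) = λ. -/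
/-- Correctness of the sorting-based threshold for ℓ₁-ball projection
    (Duchi et al., 2008): with `μ` the decreasing rearrangement of `(|η j|)`,
    `k* = max{k : μₖ > (∑_{l=1}^k μₗ − λ)/k}` and `θ = (∑_{k=1}^{k*} μₖ − λ)/k*`,
    we have `θ ≥ 0` and `∑ⱼ max(|ηⱼ| − θ, 0) = λ`.
    (`μ` is 0-indexed here, so the k-th largest value is `μ (k-1)`.) -/
theorem stmt_8 {p : ℕ} (η : Fin p → ℝ) (lam : ℝ) (hlam : 0 ≤ lam)
    (hgt : lam < ∑ j, |η j|)
    (μ : ℕ → ℝ) (σ : Equiv.Perm (Fin p))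
    (hμ : ∀ j : Fin p, μ (j : ℕ) = |η (σ j)|)
    (hsort : ∀ i j : Fin p, i ≤ j → μ (j : ℕ) ≤ μ (i : ℕ))
    (kstar : ℕ)
    (hkmem : kstar ∈ Finset.Icc 1 p ∧
      (∑ l ∈ Finset.range kstar, μ l - lam) / (kstar : ℝ) < μ (kstar - 1))
    (hkmax : ∀ k ∈ Finset.Icc 1 p,
      (∑ l ∈ Finset.range k, μ l - lam) / (k : ℝ) < μ (k - 1) → k ≤ kstar)
    (θ : ℝ) (hθ : θ = (∑ l ∈ Finset.range kstar, μ l - lam) / (kstar : ℝ)) :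
    0 ≤ θ ∧ ∑ j, max (|η j| - θ) 0 = lam := by
  obtain ⟨hk1, hkcond⟩ := hkmem
  rw [Finset.mem_Icc] at hk1
  obtain ⟨hk1', hkp⟩ := hk1
  have hkpos : (0:ℝ) < (kstar:ℝ) := by exact_mod_cast hk1'
  set S := ∑ l ∈ Finset.range kstar, μ l with hS
  have hkθ : (kstar:ℝ) * θ = S - lam := by
    rw [hθ]; field_simp
  have hsort' : ∀ i j : ℕ, i ≤ j → j < p → μ j ≤ μ i := by
    intro i j hij hj
    exact hsort ⟨i, lt_of_le_of_lt hij hj⟩ ⟨j, hj⟩ hij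
  have hA : ∀ i < kstar, θ < μ i := by
    intro i hi
    have h1 : θ < μ (kstar - 1) := by rw [hθ]; exact hkcond
    have h2 : μ (kstar - 1) ≤ μ i := hsort' i (kstar - 1) (by omega) (by omega)
    linarith
  have hB : ∀ i, kstar ≤ i → i < p → μ i ≤ θ := by
    intro i hki hip
    have hkp' : kstar < p := lt_of_le_of_lt hki hip
    have hμk : μ kstar ≤ θ := by
      have hnot : ¬ ((∑ l ∈ Finset.range (kstar+1), μ l - lam) / ((kstar+1 : ℕ) : ℝ)
          < μ (kstar + 1 - 1)) := by
        intro h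
        have := hkmax (kstar+1) (Finset.mem_Icc.mpr ⟨by omega, by omega⟩) h
        omega
      push_neg at hnot
      rw [Finset.sum_range_succ] at hnot
      simp only [Nat.add_sub_cancel] at hnot
      have hk1pos : (0:ℝ) < ((kstar+1 : ℕ) : ℝ) := by positivity
      rw [le_div_iff₀ hk1pos] at hnot
      push_cast at hnot
      nlinarith
    have := hsort' kstar i hki hip
    linarith
  have hsum_all : ∑ l ∈ Finset.range p, μ l = ∑ j, |η j| := by
    rw [Finset.sum_range (fun l => μ l)]
    rw [show (∑ j : Fin p, μ (j : ℕ)) = ∑ j : Fin p, |η (σ j)| from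
      Finset.sum_congr rfl fun j _ => hμ j]
    exact Equiv.sum_comp σ (fun j => |η j|)
  have hθ0 : 0 ≤ θ := by
    rcases eq_or_lt_of_le hkp with heq | hlt
    · have h : (kstar:ℝ) * θ = ∑ j, |η j| - lam := by
        rw [hkθ, hS, heq, hsum_all]
      nlinarith
    · have h0 : 0 ≤ μ kstar := by
        have h1 := hμ ⟨kstar, hlt⟩
        simp only at h1
        rw [h1]
        exact abs_nonneg _
      have := hB kstar le_rfl hlt
      linarith
  refine ⟨hθ0, ?_⟩
  have h1 : ∑ j, max (|η j| - θ) 0 = ∑ j : Fin p, max (μ (j : ℕ) - θ) 0 := by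
    rw [← Equiv.sum_comp σ (fun j => max (|η j| - θ) 0)]
    exact Finset.sum_congr rfl fun j _ => by rw [hμ j]
  rw [h1, ← Finset.sum_range (fun l => max (μ l - θ) 0),
      ← Finset.sum_range_add_sum_Ico _ hkp]
  have h2 : ∑ l ∈ Finset.range kstar, max (μ l - θ) 0 = S - (kstar:ℝ) * θ := by
    rw [show S - (kstar:ℝ) * θ = ∑ l ∈ Finset.range kstar, (μ l - θ) by
      rw [Finset.sum_sub_distrib, Finset.sum_const, Finset.card_range, nsmul_eq_mul]]
    exact Finset.sum_congr rfl fun l hl =>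
      max_eq_left (by have := hA l (Finset.mem_range.mp hl); linarith)
  have h3 : ∑ l ∈ Finset.Ico kstar p, max (μ l - θ) 0 = 0 := by
    apply Finset.sum_eq_zero
    intro l hl
    rw [Finset.mem_Ico] at hl
    exact max_eq_right (by have := hB l hl.1 hl.2; linarith)
  rw [h2, h3]
  linarith
end

section
/- For the group projection problem: minimize ∑ₖ‖η⁽ᵏ⁾ − β⁽ᵏ⁾‖₂² subject to ∑ₖ‖β⁽ᵏ⁾‖₂ ≤ λ, the optimal solution is β⁽ᵏ⁾ = η⁽ᵏ⁾ · (ξ̄ₖ/ξₖ) where ξₖ = ‖η⁽ᵏ⁾‖₂ (with β⁽ᵏ⁾ = 0 if ξₖ = 0) and (ξ̄₁,…,ξ̄_g) is the Euclidean projection of (ξ₁,…,ξ_g) onto the ℓ₁-ball of radius λ in ℝᵍ. -/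
/-!
Write `ξₖ = ‖η⁽ᵏ⁾‖`. For any feasible `β'`, the numbers `xₖ = ‖β'⁽ᵏ⁾‖` lie in the ℓ₁-ball, and the
reverse triangle inequality gives `(ξₖ - xₖ)² ≤ ‖η⁽ᵏ⁾ - β'⁽ᵏ⁾‖²`; so the group objective of `β'` is
at least `∑ₖ (ξₖ - xₖ)² ≥ ∑ₖ (ξₖ - ξ̄ₖ)²`. The rescaled `β⁽ᵏ⁾` points in the direction of `η⁽ᵏ⁾`
with norm `|ξ̄ₖ|`, so it is feasible and attains `‖η⁽ᵏ⁾ - β⁽ᵏ⁾‖² = (ξₖ - ξ̄ₖ)²` (or `0` when `ξₖ = 0`).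
-/

open Finset

section
variable {ι : Type*} [Fintype ι]

lemma sq_sqrt_sum_sq_sub_sqrt_sum_sq_le (a b : ι → ℝ) :
    (√(∑ j, a j ^ 2) - √(∑ j, b j ^ 2)) ^ 2 ≤ ∑ j, (a j - b j) ^ 2 := by
  have hcs := Real.sum_mul_le_sqrt_mul_sqrt univ a b
  have hexpand : ∑ j, (a j - b j) ^ 2 = ∑ j, a j ^ 2 + ∑ j, b j ^ 2 - 2 * ∑ j, a j * b j := by
    simp only [sub_sq, sum_sub_distrib, sum_add_distrib, mul_sum, mul_assoc]; ring
  rw [hexpand, sub_sq, Real.sq_sqrt (by positivity), Real.sq_sqrt (by positivity)]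
  linarith

noncomputable def rescaleToNorm (v : ι → ℝ) (c : ℝ) : ι → ℝ :=
  fun j => if √(∑ i, v i ^ 2) = 0 then 0 else v j * (c / √(∑ i, v i ^ 2))

lemma sum_mul_right_sq (v : ι → ℝ) (t : ℝ) : ∑ j, (v j * t) ^ 2 = (∑ j, v j ^ 2) * t ^ 2 := by
  simp only [mul_pow, sum_mul]

lemma sqrt_sum_sq_rescaleToNorm_le (v : ι → ℝ) (c : ℝ) :
    √(∑ j, rescaleToNorm v c j ^ 2) ≤ |c| := by
  have hS : ∑ i, v i ^ 2 = √(∑ i, v i ^ 2) ^ 2 := (Real.sq_sqrt (by positivity)).symm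
  unfold rescaleToNorm
  generalize √(∑ i, v i ^ 2) = N at hS ⊢
  by_cases h : N = 0
  · simp [h]
  · simp only [h, if_false, sum_mul_right_sq]
    rw [hS, ← mul_pow, mul_div_cancel₀ c h, Real.sqrt_sq_eq_abs]

lemma sum_sq_sub_rescaleToNorm_le (v : ι → ℝ) (c : ℝ) :
    ∑ j, (v j - rescaleToNorm v c j) ^ 2 ≤ (√(∑ i, v i ^ 2) - c) ^ 2 := by
  have hS : ∑ i, v i ^ 2 = √(∑ i, v i ^ 2) ^ 2 := (Real.sq_sqrt (by positivity)).symm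
  unfold rescaleToNorm
  generalize √(∑ i, v i ^ 2) = N at hS ⊢
  by_cases h : N = 0
  · simpa [h, hS] using sq_nonneg c
  · have hterm : ∀ j, v j - v j * (c / N) = v j * (1 - c / N) := fun j => by ring
    simp only [h, if_false, hterm, sum_mul_right_sq]
    rw [hS, ← mul_pow, mul_one_sub, mul_div_cancel₀ c h]

end

theorem stmt_12_general {g : ℕ} {d : Fin g → ℕ} (η : (k : Fin g) → Fin (d k) → ℝ)
    (lam : ℝ)
    (ξ : Fin g → ℝ) (hξ : ∀ k, ξ k = Real.sqrt (∑ j, (η k j) ^ 2))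
    (ξbar : Fin g → ℝ)
    (hξbarfeas : ∑ k, |ξbar k| ≤ lam)
    (hξbaropt : ∀ x : Fin g → ℝ, ∑ k, |x k| ≤ lam →
      ∑ k, (ξ k - ξbar k) ^ 2 ≤ ∑ k, (ξ k - x k) ^ 2)
    (β : (k : Fin g) → Fin (d k) → ℝ)
    (hβ : ∀ k j, β k j = if ξ k = 0 then 0 else η k j * (ξbar k / ξ k)) :
    (∑ k, Real.sqrt (∑ j, (β k j) ^ 2) ≤ lam) ∧
    ∀ β' : (k : Fin g) → Fin (d k) → ℝ,
      (∑ k, Real.sqrt (∑ j, (β' k j) ^ 2) ≤ lam) →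
      ∑ k, ∑ j, (η k j - β k j) ^ 2 ≤ ∑ k, ∑ j, (η k j - β' k j) ^ 2 := by
  have hβ_eq : ∀ k, β k = rescaleToNorm (η k) (ξbar k) := fun k => by
    funext j; rw [hβ, hξ]; rfl
  refine ⟨?_, fun β' hβ' => ?_⟩
  · calc ∑ k, √(∑ j, β k j ^ 2) ≤ ∑ k, |ξbar k| := sum_le_sum fun k _ => by
          rw [hβ_eq]; exact sqrt_sum_sq_rescaleToNorm_le _ _
      _ ≤ lam := hξbarfeas
  · have hx : ∑ k, |√(∑ j, β' k j ^ 2)| ≤ lam := by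
      simpa only [abs_of_nonneg (Real.sqrt_nonneg _)] using hβ'
    calc ∑ k, ∑ j, (η k j - β k j) ^ 2 ≤ ∑ k, (ξ k - ξbar k) ^ 2 := sum_le_sum fun k _ => by
          rw [hβ_eq, hξ]; exact sum_sq_sub_rescaleToNorm_le _ _
      _ ≤ ∑ k, (ξ k - √(∑ j, β' k j ^ 2)) ^ 2 := hξbaropt _ hx
      _ ≤ ∑ k, ∑ j, (η k j - β' k j) ^ 2 := sum_le_sum fun k _ => by
          rw [hξ]; exact sq_sqrt_sum_sq_sub_sqrt_sum_sq_le _ _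

/-- Correctness of the group ℓ₁-ball projection: if `ξ̄` is the Euclidean
    projection of the vector of group norms `ξₖ = ‖η⁽ᵏ⁾‖₂` onto the ℓ₁-ball of
    radius `λ` in `ℝ^g`, then `β⁽ᵏ⁾ = η⁽ᵏ⁾·(ξ̄ₖ/ξₖ)` (with `β⁽ᵏ⁾ = 0` when
    `ξₖ = 0`) is the optimal solution of the group projection problem. -/
theorem stmt_12 {g : ℕ} {d : Fin g → ℕ} (η : (k : Fin g) → Fin (d k) → ℝ)
    (lam : ℝ) (hlam : 0 ≤ lam)
    (ξ : Fin g → ℝ) (hξ : ∀ k, ξ k = Real.sqrt (∑ j, (η k j) ^ 2))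
    (ξbar : Fin g → ℝ)
    (hξbarfeas : ∑ k, |ξbar k| ≤ lam)
    (hξbaropt : ∀ x : Fin g → ℝ, ∑ k, |x k| ≤ lam →
      ∑ k, (ξ k - ξbar k) ^ 2 ≤ ∑ k, (ξ k - x k) ^ 2)
    (β : (k : Fin g) → Fin (d k) → ℝ)
    (hβ : ∀ k j, β k j = if ξ k = 0 then 0 else η k j * (ξbar k / ξ k)) :
    (∑ k, Real.sqrt (∑ j, (β k j) ^ 2) ≤ lam) ∧
    ∀ β' : (k : Fin g) → Fin (d k) → ℝ,
      (∑ k, Real.sqrt (∑ j, (β' k j) ^ 2) ≤ lam) →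
      ∑ k, ∑ j, (η k j - β k j) ^ 2 ≤ ∑ k, ∑ j, (η k j - β' k j) ^ 2 :=
  stmt_12_general η lam ξ hξ ξbar hξbarfeas hξbaropt β hβ
end

section
/- Any optimal solution (β⁽¹⁾,…,β⁽ᵍ⁾) of the group projection problem satisfies that β⁽ᵏ⁾ is a nonnegative scalar multiple of η⁽ᵏ⁾ for every group k with η⁽ᵏ⁾ ≠ 0. -/
/-!
Replacing the block `β⁽ᵏ⁾` by the vector `(‖β⁽ᵏ⁾‖ / ‖η⁽ᵏ⁾‖) η⁽ᵏ⁾` leaves every block norm, hence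
feasibility, unchanged, and changes the objective by `2 (⟪η⁽ᵏ⁾, β⁽ᵏ⁾⟫ - ‖η⁽ᵏ⁾‖ ‖β⁽ᵏ⁾‖)`. Optimality of
`β` makes this nonnegative, so Cauchy–Schwarz holds with equality and `β⁽ᵏ⁾` is that multiple.
-/

open Function

theorem Finset.sum_apply_update_sub_sum {ι : Type*} [Fintype ι] [DecidableEq ι] {α : ι → Type*}
    (F : ∀ i, α i → ℝ) (β : ∀ i, α i) (k : ι) (v : α k) :
    ∑ i, F i (update β k v i) - ∑ i, F i (β i) = F k v - F k (β k) := by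
  simp only [apply_update F, Finset.sum_update_of_mem (Finset.mem_univ k),
    Finset.sum_eq_add_sum_sdiff_singleton_of_mem (Finset.mem_univ k) fun i => F i (β i)]
  ring

theorem EuclideanSpace.norm_toLp_eq_sqrt_sum_sq {ι : Type*} [Fintype ι] (v : ι → ℝ) :
    ‖(WithLp.toLp 2 v : EuclideanSpace ℝ ι)‖ = √(∑ i, v i ^ 2) := by
  rw [← EuclideanSpace.real_norm_sq_eq, Real.sqrt_sq (norm_nonneg _)]

theorem eq_smul_of_norm_sub_le_norm_sub_smul {F : Type*} [NormedAddCommGroup F]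
    [InnerProductSpace ℝ F] {x y : F} (hx : x ≠ 0)
    (h : ‖x - y‖ ^ 2 ≤ ‖x - (‖y‖ / ‖x‖) • x‖ ^ 2) : y = (‖y‖ / ‖x‖) • x := by
  have hx' : ‖x‖ ≠ 0 := norm_ne_zero_iff.mpr hx
  have h_aligned : ‖x - (‖y‖ / ‖x‖) • x‖ ^ 2 = ‖x‖ ^ 2 - 2 * (‖x‖ * ‖y‖) + ‖y‖ ^ 2 := by
    rw [norm_sub_sq_real, real_inner_smul_right, norm_smul, real_inner_self_eq_norm_sq,
      Real.norm_of_nonneg (by positivity)]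
    field_simp
  have h_inner : inner ℝ x y = ‖x‖ * ‖y‖ := by
    rw [norm_sub_sq_real, h_aligned] at h
    linarith [real_inner_le_norm x y]
  rw [div_eq_inv_mul, mul_smul, inner_eq_norm_mul_iff_real.mp h_inner, smul_smul,
    inv_mul_cancel₀ hx', one_smul]

theorem stmt_13_general {g : ℕ} {d : Fin g → ℕ} (η β : (k : Fin g) → Fin (d k) → ℝ)
    (lam : ℝ)
    (hfeas : ∑ k, Real.sqrt (∑ j, (β k j) ^ 2) ≤ lam)
    (hopt : ∀ β' : (k : Fin g) → Fin (d k) → ℝ,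
      (∑ k, Real.sqrt (∑ j, (β' k j) ^ 2) ≤ lam) →
      ∑ k, ∑ j, (η k j - β k j) ^ 2 ≤ ∑ k, ∑ j, (η k j - β' k j) ^ 2) :
    ∀ k : Fin g, η k ≠ 0 → ∃ c : ℝ, 0 ≤ c ∧ ∀ j, β k j = c * η k j := by
  intro k hk
  set x : EuclideanSpace ℝ (Fin (d k)) := WithLp.toLp 2 (η k)
  set y : EuclideanSpace ℝ (Fin (d k)) := WithLp.toLp 2 (β k)
  set c := ‖y‖ / ‖x‖
  have hx : x ≠ 0 := fun h => hk (congrArg WithLp.ofLp h)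
  have hc : 0 ≤ c := by positivity
  have h_norm : √(∑ j, (c * η k j) ^ 2) = √(∑ j, β k j ^ 2) := by
    rw [← EuclideanSpace.norm_toLp_eq_sqrt_sum_sq, ← EuclideanSpace.norm_toLp_eq_sqrt_sum_sq]
    change ‖c • x‖ = ‖y‖
    rw [norm_smul, Real.norm_of_nonneg hc, div_mul_cancel₀ _ (norm_ne_zero_iff.mpr hx)]
  have h_feas : ∑ i, √(∑ j, (update β k (fun j => c * η k j) i j) ^ 2) ≤ lam := by
    have := Finset.sum_apply_update_sub_sum (fun i (v : Fin (d i) → ℝ) => √(∑ j, v j ^ 2))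
      β k (fun j => c * η k j)
    simp only [h_norm, sub_self] at this
    linarith
  have h_dist := sub_nonneg.mpr (hopt _ h_feas)
  rw [Finset.sum_apply_update_sub_sum
    (fun i (v : Fin (d i) → ℝ) => ∑ j, (η i j - v j) ^ 2)] at h_dist
  have h_eq : y = c • x := by
    refine eq_smul_of_norm_sub_le_norm_sub_smul hx ?_
    rw [EuclideanSpace.real_norm_sq_eq, EuclideanSpace.real_norm_sq_eq]
    exact sub_nonneg.mp h_dist
  exact ⟨c, hc, fun j => congrArg (fun v => v j) h_eq⟩

/-- Any optimal solution of the group projection problem has each group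
    coefficient vector `β⁽ᵏ⁾` equal to a nonnegative scalar multiple of `η⁽ᵏ⁾`
    whenever `η⁽ᵏ⁾ ≠ 0`. -/
theorem stmt_13 {g : ℕ} {d : Fin g → ℕ} (η β : (k : Fin g) → Fin (d k) → ℝ)
    (lam : ℝ) (hlam : 0 ≤ lam)
    (hfeas : ∑ k, Real.sqrt (∑ j, (β k j) ^ 2) ≤ lam)
    (hopt : ∀ β' : (k : Fin g) → Fin (d k) → ℝ,
      (∑ k, Real.sqrt (∑ j, (β' k j) ^ 2) ≤ lam) →
      ∑ k, ∑ j, (η k j - β k j) ^ 2 ≤ ∑ k, ∑ j, (η k j - β' k j) ^ 2) :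
    ∀ k : Fin g, η k ≠ 0 → ∃ c : ℝ, 0 ≤ c ∧ ∀ j, β k j = c * η k j :=
  stmt_13_general η β lam hfeas hopt
end
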